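/- On a PX board containing at least one PX weak three and no PX or PY simple fours, PX has a winning strategy: by playing the trigger of the weak three PX creates two simple fours with disjoint trigger squares, and PY, having no simple four of his own, cannot block both. -/

import Mathlib

/- # A formal model of Gomoku patterns and restricted games -/

abbrev Square := ℤ × ℤ

inductive Cell
  | px | py | empty
deriving DecidableEq

/-- A pattern: a finite set of board squares together with their contents. -/
structure Pattern where
  dom : Finset Square
  val : Square → Cell

def Pattern.emptySquares (p : Pattern) : Finset Square :=
  p.dom.filter (fun s => p.val s = Cell.empty)

/-- Fill (or empty) a square of the pattern with the given content. -/
def Pattern.fill (p : Pattern) (s : Square) (c : Cell) : Pattern :=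
  ⟨p.dom, fun t => if t = s then c else p.val t⟩

/-- Remove a square from the pattern. -/
def Pattern.erase (p : Pattern) (s : Square) : Pattern :=
  ⟨p.dom.erase s, p.val⟩

/-- A PX pattern contains no PY stones. -/
def Pattern.isPX (p : Pattern) : Prop :=
  ∀ s ∈ p.dom, p.val s ≠ Cell.py

/-- The four alignment directions. -/
def dirs : List Square := [(1, 0), (0, 1), (1, 1), (1, -1)]

def shift (s d : Square) (i : ℕ) : Square :=
  (s.1 + (i : ℤ) * d.1, s.2 + (i : ℤ) * d.2)

/-- A block: five aligned consecutive squares starting at `s` in direction `d`. -/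
def blockSquares (s d : Square) : Finset Square :=
  (Finset.range 5).image (fun i => shift s d i)

/-- A line: nine aligned consecutive squares. -/
def lineSquares (s d : Square) : Finset Square :=
  (Finset.range 9).image (fun i => shift s d i)

def lineCenter (s d : Square) : Square := shift s d 4

/-- Five aligned consecutive stones of colour `c` inside the pattern. -/
def hasFive (p : Pattern) (c : Cell) : Prop :=
  ∃ s d, d ∈ dirs ∧ blockSquares s d ⊆ p.dom ∧ ∀ t ∈ blockSquares s d, p.val t = c

/-- `winsIn b n p`: in the game restricted to `p`, with PX to move iff `b`,
PX (playing optimally) forces a five-in-a-row within `n` further plies,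
against any play of PY. -/
def winsIn : Bool → ℕ → Pattern → Prop
  | _, 0, p => hasFive p Cell.px
  | true, n + 1, p =>
      hasFive p Cell.px ∨ (¬ hasFive p Cell.py ∧
        ∃ s ∈ p.emptySquares, winsIn false n (p.fill s Cell.px))
  | false, n + 1, p =>
      hasFive p Cell.px ∨ (¬ hasFive p Cell.py ∧ p.emptySquares.Nonempty ∧
        ∀ s ∈ p.emptySquares, winsIn true n (p.fill s Cell.py))

/-- PX wins the restricted game moving first. -/
def pxWinsFirst (p : Pattern) : Prop := ∃ n, winsIn true n p

/-- PX wins the restricted game moving second. -/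
def pxWinsSecond (p : Pattern) : Prop := ∃ n, winsIn false n p

/-- A PX victory: a PX pattern where PX wins moving first or second. -/
def isVictory (p : Pattern) : Prop := p.isPX ∧ pxWinsFirst p ∧ pxWinsSecond p

/-- A victory of `n` steps: PX, moving second, wins placing `n` stones
(i.e. within `2*n` plies) and no fewer. -/
def victorySteps (p : Pattern) (n : ℕ) : Prop :=
  isVictory p ∧ winsIn false (2 * n) p ∧ ∀ m < n, ¬ winsIn false (2 * m) p

/-- A trigger of a pattern: an empty square whose filling by PX yields a PX victory. -/
def isTrigger (p : Pattern) (s : Square) : Prop :=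
  s ∈ p.emptySquares ∧ isVictory (p.fill s Cell.px)

/-- A PX attack: a PX pattern, not a victory, with a trigger. -/
def isAttack (p : Pattern) : Prop :=
  p.isPX ∧ ¬ isVictory p ∧ ∃ s, isTrigger p s

/-- An attack of `n` steps: `n` is one plus the steps of the fastest victory
reachable by playing a trigger. -/
def attackSteps (p : Pattern) (n : ℕ) : Prop :=
  isAttack p ∧ 1 ≤ n ∧
  (∃ s, isTrigger p s ∧ victorySteps (p.fill s Cell.px) (n - 1)) ∧
  (∀ s m, isTrigger p s → victorySteps (p.fill s Cell.px) m → n - 1 ≤ m)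

/-- A PX threat: a PX pattern, neither victory nor attack, with an empty square
whose filling by PX yields a PX attack. -/
def isThreat (p : Pattern) : Prop :=
  p.isPX ∧ ¬ isVictory p ∧ ¬ isAttack p ∧
  ∃ s ∈ p.emptySquares, isAttack (p.fill s Cell.px)

/-- A threat of `n` steps: one plus the steps of the fastest reachable attack. -/
def threatSteps (p : Pattern) (n : ℕ) : Prop :=
  isThreat p ∧ 2 ≤ n ∧
  (∃ s ∈ p.emptySquares, attackSteps (p.fill s Cell.px) (n - 1)) ∧
  (∀ s ∈ p.emptySquares, ∀ m, attackSteps (p.fill s Cell.px) m → n - 1 ≤ m)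

/-- `q` is a sub-pattern of `p`. -/
def SubPattern (q p : Pattern) : Prop :=
  q.dom ⊆ p.dom ∧ ∀ s ∈ q.dom, q.val s = p.val s

/-- Two patterns are compatible if they agree on common squares. -/
def Compatible (p q : Pattern) : Prop :=
  ∀ s ∈ p.dom ∩ q.dom, p.val s = q.val s

/-- Union of two (compatible) patterns. -/
def Pattern.union (p q : Pattern) : Pattern :=
  ⟨p.dom ∪ q.dom, fun s => if s ∈ p.dom then p.val s else q.val s⟩

open Classical in
/-- The defence of an attack: the empty squares where PY, moving first in the
restricted game, can play to stop PX from winning. -/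
noncomputable def Defence (p : Pattern) : Finset Square :=
  p.emptySquares.filter (fun s => ¬ pxWinsFirst (p.fill s Cell.py))

/-- A simple five as a relative pattern: exactly one block, all PX stones. -/
def isS5Pattern (q : Pattern) : Prop :=
  ∃ s d, d ∈ dirs ∧ q.dom = blockSquares s d ∧ ∀ t ∈ q.dom, q.val t = Cell.px

/-- A simple four as a relative pattern: one block, four PX stones, one empty. -/
def isS4Pattern (q : Pattern) : Prop :=
  ∃ s d, d ∈ dirs ∧ q.dom = blockSquares s d ∧
    (q.dom.filter (fun t => q.val t = Cell.px)).card = 4 ∧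
    (q.dom.filter (fun t => q.val t = Cell.empty)).card = 1

/-- A simple three as a relative pattern: one block, three PX stones, two empty. -/
def isS3Pattern (q : Pattern) : Prop :=
  ∃ s d, d ∈ dirs ∧ q.dom = blockSquares s d ∧
    (q.dom.filter (fun t => q.val t = Cell.px)).card = 3 ∧
    (q.dom.filter (fun t => q.val t = Cell.empty)).card = 2

/-- A PX block of degree 4 on the board `p`: a block inside `p` with no PY
stones and exactly four PX stones. -/
def isPXBlock4 (p : Pattern) (t d : Square) : Prop :=
  blockSquares t d ⊆ p.dom ∧ (∀ u ∈ blockSquares t d, p.val u ≠ Cell.py) ∧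
  ((blockSquares t d).filter (fun u => p.val u = Cell.px)).card = 4

/-- A simple four for colour `c` on board `p`: a block inside `p` with four
stones of colour `c` and a single empty (trigger) square `g`. -/
def isSimpleFourBlock (p : Pattern) (c : Cell) (t d g : Square) : Prop :=
  d ∈ dirs ∧ blockSquares t d ⊆ p.dom ∧ g ∈ blockSquares t d ∧
  p.val g = Cell.empty ∧ ∀ u ∈ blockSquares t d, u ≠ g → p.val u = c

/-- A simple three for PX on board `p`: a block inside `p` with three PX
stones, two empty squares and no PY stones. -/
def isSimpleThreeBlock (p : Pattern) (t d : Square) : Prop :=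
  d ∈ dirs ∧ blockSquares t d ⊆ p.dom ∧ (∀ u ∈ blockSquares t d, p.val u ≠ Cell.py) ∧
  ((blockSquares t d).filter (fun u => p.val u = Cell.px)).card = 3 ∧
  ((blockSquares t d).filter (fun u => p.val u = Cell.empty)).card = 2

/-- The tracker vector of two blocks `A`, `B`: at each square, the number of
blocks among `A`, `B` in which that square is empty. -/
def tracker (p : Pattern) (A B : Finset Square) (t : Square) : ℕ :=
  (if t ∈ A ∧ p.val t = Cell.empty then 1 else 0) +
  (if t ∈ B ∧ p.val t = Cell.empty then 1 else 0)

/-- The pattern `+XXXX+`: six aligned consecutive squares, four PX stones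
flanked by two empty squares. -/
def d4pat : Pattern :=
  ⟨(Finset.range 6).image (fun i : ℕ => ((i : ℤ), (0 : ℤ))),
   fun s => if s = ((0 : ℤ), (0 : ℤ)) ∨ s = ((5 : ℤ), (0 : ℤ)) then Cell.empty else Cell.px⟩

/-- The pattern `XXXX+`: four aligned consecutive PX stones followed by one
empty square. -/
def s4pat : Pattern :=
  ⟨(Finset.range 5).image (fun i : ℕ => ((i : ℤ), (0 : ℤ))),
   fun s => if s = ((4 : ℤ), (0 : ℤ)) then Cell.empty else Cell.px⟩


/-! Playing the common empty square γ of the two threes turns each of them into a simple four,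
and their triggers are distinct because γ is the only common empty square. PY's reply fills at
most one of the two triggers and, having no simple four, cannot make five himself; PX then
completes the other four. -/

namespace Pattern

@[simp] lemma fill_val_self (p : Pattern) (s : Square) (c : Cell) :
    (p.fill s c).val s = c := if_pos rfl

lemma fill_val_of_ne (p : Pattern) {s t : Square} (c : Cell) (h : t ≠ s) :
    (p.fill s c).val t = p.val t := if_neg h

lemma mem_emptySquares {p : Pattern} {s : Square} :
    s ∈ p.emptySquares ↔ s ∈ p.dom ∧ p.val s = Cell.empty :=
  Finset.mem_filter

end Pattern

open Pattern

lemma not_hasFive_fill_of_ne {p : Pattern} {c c' : Cell} (s : Square) (hc : c' ≠ c)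
    (h : ¬ hasFive p c) : ¬ hasFive (p.fill s c') c := by
  rintro ⟨a, d, hd, hsub, hall⟩
  refine h ⟨a, d, hd, hsub, fun u hu => ?_⟩
  by_cases hus : u = s
  · exact absurd (fill_val_self p s c' ▸ hus ▸ hall u hu) hc
  · simpa only [fill_val_of_ne p c' hus] using hall u hu

lemma not_hasFive_fill_of_not_simpleFour {p : Pattern} {c : Cell} {s : Square}
    (h5 : ¬ hasFive p c) (h4 : ¬ ∃ t d g, isSimpleFourBlock p c t d g)
    (hs : p.val s = Cell.empty) : ¬ hasFive (p.fill s c) c := by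
  rintro ⟨a, d, hd, hsub, hall⟩
  by_cases hsin : s ∈ blockSquares a d
  · refine h4 ⟨a, d, s, hd, hsub, hsin, hs, fun u hu hus => ?_⟩
    simpa only [fill_val_of_ne p c hus] using hall u hu
  · refine h5 ⟨a, d, hd, hsub, fun u hu => ?_⟩
    have hus : u ≠ s := fun h => hsin (h ▸ hu)
    simpa only [fill_val_of_ne p c hus] using hall u hu

namespace isSimpleFourBlock

variable {p : Pattern} {c : Cell} {t d g : Square}

lemma mem_emptySquares (h : isSimpleFourBlock p c t d g) : g ∈ p.emptySquares :=
  Pattern.mem_emptySquares.mpr ⟨h.2.1 h.2.2.1, h.2.2.2.1⟩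

lemma hasFive_fill (h : isSimpleFourBlock p c t d g) : hasFive (p.fill g c) c := by
  obtain ⟨hd, hsub, -, -, hall⟩ := h
  refine ⟨t, d, hd, hsub, fun u hu => ?_⟩
  by_cases hug : u = g
  · rw [hug, fill_val_self]
  · rw [fill_val_of_ne p c hug]
    exact hall u hu hug

lemma fill_of_ne {s : Square} (h : isSimpleFourBlock p c t d g) (c' : Cell)
    (hs : p.val s ≠ c) (hsg : s ≠ g) : isSimpleFourBlock (p.fill s c') c t d g := by
  obtain ⟨hd, hsub, hg, hge, hall⟩ := h
  refine ⟨hd, hsub, hg, ?_, fun u hu hug => ?_⟩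
  · rwa [fill_val_of_ne p c' (Ne.symm hsg)]
  · have hus : u ≠ s := by
      rintro rfl
      exact hs (hall u hu hug)
    rw [fill_val_of_ne p c' hus]
    exact hall u hu hug

end isSimpleFourBlock

lemma not_simpleFour_fill_of_ne {p : Pattern} {c c' : Cell} (s : Square) (hc : c' ≠ c)
    (hce : c' ≠ Cell.empty) (h : ¬ ∃ t d g, isSimpleFourBlock p c t d g) :
    ¬ ∃ t d g, isSimpleFourBlock (p.fill s c') c t d g := by
  rintro ⟨t, d, g, hd, hsub, hg, hge, hall⟩
  have hgs : g ≠ s := by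
    rintro rfl
    exact hce (fill_val_self p g c' ▸ hge)
  refine h ⟨t, d, g, hd, hsub, hg, ?_, fun u hu hug => ?_⟩
  · rwa [fill_val_of_ne p c' hgs] at hge
  · by_cases hus : u = s
    · exact absurd (fill_val_self p s c' ▸ hus ▸ hall u hu hug) hc
    · simpa only [fill_val_of_ne p c' hus] using hall u hu hug

lemma isSimpleThreeBlock.exists_fill_isSimpleFourBlock {p : Pattern} {t d γ : Square}
    (h : isSimpleThreeBlock p t d) (hγ : γ ∈ blockSquares t d) (hγe : p.val γ = Cell.empty) :
    ∃ g ∈ blockSquares t d, g ≠ γ ∧ p.val g = Cell.empty ∧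
      isSimpleFourBlock (p.fill γ Cell.px) Cell.px t d g := by
  obtain ⟨hd, hsub, hnpy, -, hcard⟩ := h
  set E := (blockSquares t d).filter (fun u => p.val u = Cell.empty)
  have hγE : γ ∈ E := Finset.mem_filter.mpr ⟨hγ, hγe⟩
  obtain ⟨g, hEg⟩ : ∃ g, E.erase γ = {g} :=
    Finset.card_eq_one.mp (by rw [Finset.card_erase_of_mem hγE, hcard])
  have hgE : g ∈ E.erase γ := hEg ▸ Finset.mem_singleton_self g
  obtain ⟨hgγ, hgE⟩ := Finset.mem_erase.mp hgE
  obtain ⟨hg, hge⟩ := Finset.mem_filter.mp hgE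
  refine ⟨g, hg, hgγ, hge, hd, hsub, hg, ?_, fun u hu hug => ?_⟩
  · rwa [fill_val_of_ne p Cell.px hgγ]
  by_cases huγ : u = γ
  · rw [huγ, fill_val_self]
  rw [fill_val_of_ne p Cell.px huγ]
  cases hc : p.val u with
  | px => rfl
  | py => exact absurd hc (hnpy u hu)
  | empty =>
    have : u ∈ E.erase γ := Finset.mem_erase.mpr ⟨huγ, Finset.mem_filter.mpr ⟨hu, hc⟩⟩
    exact absurd (Finset.mem_singleton.mp (hEg ▸ this)) hug

lemma winsIn_false_two_of_simpleFours {q : Pattern} {t₁ d₁ g₁ t₂ d₂ g₂ : Square}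
    (hpy : ¬ hasFive q Cell.py) (hnoY : ¬ ∃ t d g, isSimpleFourBlock q Cell.py t d g)
    (hf₁ : isSimpleFourBlock q Cell.px t₁ d₁ g₁) (hf₂ : isSimpleFourBlock q Cell.px t₂ d₂ g₂)
    (hg : g₁ ≠ g₂) : winsIn false 2 q := by
  refine Or.inr ⟨hpy, ⟨g₁, hf₁.mem_emptySquares⟩, fun s hs => ?_⟩
  obtain ⟨-, hse⟩ := Pattern.mem_emptySquares.mp hs
  refine Or.inr ⟨not_hasFive_fill_of_not_simpleFour hpy hnoY hse, ?_⟩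
  obtain ⟨t, d, g, hf, hsg⟩ : ∃ t d g, isSimpleFourBlock q Cell.px t d g ∧ s ≠ g := by
    by_cases hs₁ : s = g₁
    · exact ⟨t₂, d₂, g₂, hf₂, hs₁ ▸ hg⟩
    · exact ⟨t₁, d₁, g₁, hf₁, hs₁⟩
  have hf' := hf.fill_of_ne Cell.py (by simp [hse]) hsg
  exact ⟨g, hf'.mem_emptySquares, hf'.hasFive_fill⟩

lemma exists_simpleFours_of_weakThree {p : Pattern} {t₁ d₁ t₂ d₂ γ : Square}
    (h₁ : isSimpleThreeBlock p t₁ d₁) (h₂ : isSimpleThreeBlock p t₂ d₂)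
    (hint : (blockSquares t₁ d₁ ∩ blockSquares t₂ d₂).filter
        (fun u => p.val u = Cell.empty) = {γ}) :
    γ ∈ p.emptySquares ∧ ∃ g₁ g₂ : Square, g₁ ≠ g₂ ∧
      isSimpleFourBlock (p.fill γ Cell.px) Cell.px t₁ d₁ g₁ ∧
      isSimpleFourBlock (p.fill γ Cell.px) Cell.px t₂ d₂ g₂ := by
  have hγ : γ ∈ (blockSquares t₁ d₁ ∩ blockSquares t₂ d₂).filter
      (fun u => p.val u = Cell.empty) := hint ▸ Finset.mem_singleton_self γ
  obtain ⟨hγ₁₂, hγe⟩ := Finset.mem_filter.mp hγ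
  obtain ⟨hγ₁, hγ₂⟩ := Finset.mem_inter.mp hγ₁₂
  obtain ⟨g₁, hg₁, hg₁γ, hg₁e, hf₁⟩ := h₁.exists_fill_isSimpleFourBlock hγ₁ hγe
  obtain ⟨g₂, hg₂, -, -, hf₂⟩ := h₂.exists_fill_isSimpleFourBlock hγ₂ hγe
  refine ⟨Pattern.mem_emptySquares.mpr ⟨h₁.2.1 hγ₁, hγe⟩, g₁, g₂, ?_, hf₁, hf₂⟩
  rintro rfl
  have : g₁ ∈ (blockSquares t₁ d₁ ∩ blockSquares t₂ d₂).filter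
      (fun u => p.val u = Cell.empty) :=
    Finset.mem_filter.mpr ⟨Finset.mem_inter.mpr ⟨hg₁, hg₂⟩, hg₁e⟩
  exact hg₁γ (Finset.mem_singleton.mp (hint ▸ this))

theorem stmt19_general (p : Pattern)
    (hpy : ¬ hasFive p Cell.py)
    (t₁ d₁ t₂ d₂ γ : Square)
    (h₁ : isSimpleThreeBlock p t₁ d₁) (h₂ : isSimpleThreeBlock p t₂ d₂)
    (hint : (blockSquares t₁ d₁ ∩ blockSquares t₂ d₂).filter
        (fun u => p.val u = Cell.empty) = {γ})
    (hnoY : ¬ ∃ t d g : Square, isSimpleFourBlock p Cell.py t d g) :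
    pxWinsFirst p ∧
    (∃ g₁ g₂ : Square, g₁ ≠ g₂ ∧
      isSimpleFourBlock (p.fill γ Cell.px) Cell.px t₁ d₁ g₁ ∧
      isSimpleFourBlock (p.fill γ Cell.px) Cell.px t₂ d₂ g₂) := by
  obtain ⟨hγ, g₁, g₂, hg, hf₁, hf₂⟩ := exists_simpleFours_of_weakThree h₁ h₂ hint
  have hwin : winsIn false 2 (p.fill γ Cell.px) :=
    winsIn_false_two_of_simpleFours (not_hasFive_fill_of_ne γ (by decide) hpy)
      (not_simpleFour_fill_of_ne γ (by decide) (by decide) hnoY) hf₁ hf₂ hg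
  exact ⟨⟨3, Or.inr ⟨hpy, γ, hγ, hwin⟩⟩, g₁, g₂, hg, hf₁, hf₂⟩

/-- On a PX board containing a PX weak three (two simple threes
intersecting in exactly one empty square γ) and no PX or PY simple four, PX has
a winning strategy: playing γ creates two PX simple fours with distinct trigger
squares, which PY cannot both block. -/
theorem stmt19 (p : Pattern)
    (hpx : ¬ hasFive p Cell.px) (hpy : ¬ hasFive p Cell.py)
    (t₁ d₁ t₂ d₂ γ : Square)
    (h₁ : isSimpleThreeBlock p t₁ d₁) (h₂ : isSimpleThreeBlock p t₂ d₂)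
    (hint : (blockSquares t₁ d₁ ∩ blockSquares t₂ d₂).filter
        (fun u => p.val u = Cell.empty) = {γ})
    (hnoX : ¬ ∃ t d g : Square, isSimpleFourBlock p Cell.px t d g)
    (hnoY : ¬ ∃ t d g : Square, isSimpleFourBlock p Cell.py t d g) :
    pxWinsFirst p ∧
    (∃ g₁ g₂ : Square, g₁ ≠ g₂ ∧
      isSimpleFourBlock (p.fill γ Cell.px) Cell.px t₁ d₁ g₁ ∧
      isSimpleFourBlock (p.fill γ Cell.px) Cell.px t₂ d₂ g₂) :=
  stmt19_general p hpy t₁ d₁ t₂ d₂ γ h₁ h₂ hint hnoY
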